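/- arXiv:1902.03358 — 3 statements merged into one kernel-verified Lean document; each statement's English description precedes it below -/
import Mathlib

section
/- Let μ be a topological measure on a locally compact, Hausdorff, connected space X. (A) If μ(X) < ∞ and f ∈ C₀(X), then there exists a finite Borel measure m_f on ℝ such that m_f(W) = μ(f⁻¹(W)) for every open set W ⊆ ℝ. (B) If μ is compact-finite and f ∈ C_c(X), then there exists a compact-finite Borel measure m_f on ℝ such that m_f(W) = μ(f⁻¹(W \ {0})) for every open set W ⊆ ℝ; in particular m_f(W) = μ(f⁻¹(W)) for every open W ⊆ ℝ \ {0}. In either case m_f is the Lebesgue–Stieltjes measure associated with the distribution function F of f, and the support of m_f is contained in the closure of f(X). -/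
open Set Filter Topology MeasureTheory
open scoped ENNReal BoundedContinuousFunction

universe u

/-- A topological measure on `X`: a set function on subsets of `X` (only its values on open
and closed sets matter), not identically `∞` on open/closed sets, satisfying (TM1)–(TM3). -/
structure TopMeasure (X : Type u) [TopologicalSpace X] where
  toFun : Set X → ℝ≥0∞
  not_all_top : ∃ A : Set X, (IsOpen A ∨ IsClosed A) ∧ toFun A ≠ ∞
  tm1 : ∀ A B : Set X, Disjoint A B → (IsOpen A ∨ IsCompact A) → (IsOpen B ∨ IsCompact B) →
      (IsOpen (A ∪ B) ∨ IsCompact (A ∪ B)) → toFun (A ∪ B) = toFun A + toFun B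
  tm2 : ∀ U : Set X, IsOpen U → toFun U = ⨆ K ∈ {K : Set X | IsCompact K ∧ K ⊆ U}, toFun K
  tm3 : ∀ F : Set X, IsClosed F → toFun F = ⨅ U ∈ {U : Set X | IsOpen U ∧ F ⊆ U}, toFun U

/-- `μ` is compact-finite. -/
def TopMeasure.CompactFinite {X : Type u} [TopologicalSpace X] (μ : TopMeasure X) : Prop :=
  ∀ K : Set X, IsCompact K → μ.toFun K ≠ ∞

/-- The set of compactly supported continuous functions, inside `C_b(X)`. -/
def CcS (X : Type u) [TopologicalSpace X] : Set (X →ᵇ ℝ) :=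
  {f | HasCompactSupport (f : X → ℝ)}

/-- The set of continuous functions vanishing at infinity, inside `C_b(X)`. -/
def C0S (X : Type u) [TopologicalSpace X] : Set (X →ᵇ ℝ) :=
  {f | Tendsto (f : X → ℝ) (cocompact X) (nhds 0)}

/-- `𝔅` is a (non-unital) subalgebra of `C_b(X)`. -/
def IsSubalgS {X : Type u} [TopologicalSpace X] (𝔅 : Set (X →ᵇ ℝ)) : Prop :=
  (∀ f g : X →ᵇ ℝ, f ∈ 𝔅 → g ∈ 𝔅 → f + g ∈ 𝔅) ∧
  (∀ f g : X →ᵇ ℝ, f ∈ 𝔅 → g ∈ 𝔅 → f * g ∈ 𝔅) ∧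
  (∀ (c : ℝ) (f : X →ᵇ ℝ), f ∈ 𝔅 → c • f ∈ 𝔅)

/-- The singly generated subalgebra `B(h)`: the smallest closed (in `𝔅`) subalgebra of `𝔅`
containing `h`. -/
def sgen {X : Type u} [TopologicalSpace X] (𝔅 : Set (X →ᵇ ℝ)) (h : X →ᵇ ℝ) :
    Set (X →ᵇ ℝ) :=
  ⋂₀ {S : Set (X →ᵇ ℝ) | S ⊆ 𝔅 ∧ h ∈ S ∧
      (∀ f g : X →ᵇ ℝ, f ∈ S → g ∈ S → f + g ∈ S) ∧
      (∀ f g : X →ᵇ ℝ, f ∈ S → g ∈ S → f * g ∈ S) ∧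
      (∀ (c : ℝ) (f : X →ᵇ ℝ), f ∈ S → c • f ∈ S) ∧
      IsClosed {x : ↥𝔅 | (x : X →ᵇ ℝ) ∈ S}}

/-- A signed quasi-linear functional on `𝔅` (QI1), (QI2). -/
structure SignedQLF {X : Type u} [TopologicalSpace X] (𝔅 : Set (X →ᵇ ℝ)) where
  toFun : (X →ᵇ ℝ) → ℝ
  smul_eq : ∀ (a : ℝ) (f : X →ᵇ ℝ), f ∈ 𝔅 → toFun (a • f) = a * toFun f
  add_eq : ∀ h ∈ 𝔅, ∀ f g : X →ᵇ ℝ, f ∈ sgen 𝔅 h → g ∈ sgen 𝔅 h →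
      toFun (f + g) = toFun f + toFun g

/-- A (positive) quasi-linear functional on `𝔅` (QI1)–(QI3). -/
structure QLF {X : Type u} [TopologicalSpace X] (𝔅 : Set (X →ᵇ ℝ)) extends SignedQLF 𝔅 where
  pos : ∀ f : X →ᵇ ℝ, f ∈ 𝔅 → 0 ≤ f → 0 ≤ toFun f

/-- `‖ρ‖ = sup {ρ(f) : f ∈ 𝔅, 0 ≤ f ≤ 1}`, as an extended real number. -/
noncomputable def qnorm {X : Type u} [TopologicalSpace X] {𝔅 : Set (X →ᵇ ℝ)} (ρ : QLF 𝔅) :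
    ℝ≥0∞ :=
  ⨆ f ∈ {f : X →ᵇ ℝ | f ∈ 𝔅 ∧ 0 ≤ f ∧ f ≤ 1}, ENNReal.ofReal (ρ.toFun f)

/-- `m` is the measure `m_f` on `ℝ` associated with a finite topological measure `μ` and
`f ∈ C₀(X)` (case (A)): `m(W) = μ(f⁻¹(W))` for every open `W ⊆ ℝ`. -/
def IsMfA {X : Type u} [TopologicalSpace X] (μ : TopMeasure X) (f : X →ᵇ ℝ)
    (m : Measure ℝ) : Prop :=
  ∀ W : Set ℝ, IsOpen W → m W = μ.toFun ((f : X → ℝ) ⁻¹' W)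

/-- `m` is the measure `m_f` on `ℝ` associated with a compact-finite topological measure `μ`
and `f ∈ C_c(X)` (case (B)): `m(W) = μ(f⁻¹(W \ {0}))` for every open `W ⊆ ℝ`. -/
def IsMfB {X : Type u} [TopologicalSpace X] (μ : TopMeasure X) (f : X →ᵇ ℝ)
    (m : Measure ℝ) : Prop :=
  ∀ W : Set ℝ, IsOpen W → m W = μ.toFun ((f : X → ℝ) ⁻¹' (W \ {0}))

/-- The support of a (Borel) measure on `ℝ`. -/
def msupp (m : Measure ℝ) : Set ℝ := {x : ℝ | ∀ U ∈ nhds x, 0 < m U}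

/-- The set function `μ_ρ` on open sets:
`μ_ρ(U) = sup {ρ(f) : f ∈ C_c(X), 0 ≤ f ≤ 1, supp f ⊆ U}`. -/
noncomputable def muO {X : Type u} [TopologicalSpace X] {𝔅 : Set (X →ᵇ ℝ)} (ρ : QLF 𝔅)
    (U : Set X) : ℝ≥0∞ :=
  ⨆ f ∈ {f : X →ᵇ ℝ | f ∈ CcS X ∧ 0 ≤ f ∧ f ≤ 1 ∧ tsupport (f : X → ℝ) ⊆ U},
    ENNReal.ofReal (ρ.toFun f)

/-- The set function `μ_ρ` on closed sets: `μ_ρ(F) = inf {μ_ρ(U) : U open, F ⊆ U}`. -/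
noncomputable def muC {X : Type u} [TopologicalSpace X] {𝔅 : Set (X →ᵇ ℝ)} (ρ : QLF 𝔅)
    (F : Set X) : ℝ≥0∞ :=
  ⨅ U ∈ {U : Set X | IsOpen U ∧ F ⊆ U}, muO ρ U

open Classical in
/-- The set function `μ_ρ`. -/
noncomputable def muR {X : Type u} [TopologicalSpace X] {𝔅 : Set (X →ᵇ ℝ)} (ρ : QLF 𝔅) :
    Set X → ℝ≥0∞ :=
  fun A => if IsOpen A then muO ρ A else muC ρ A

/-- `ρ = ρ_μ` on `C₀(X)` (case (A)): for every `f ∈ C₀(X)` and every measure `m_f`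
associated with `μ` and `f`, `ρ(f) = ∫_ℝ id dm_f`. -/
def ReprA {X : Type u} [TopologicalSpace X] {𝔅 : Set (X →ᵇ ℝ)} (μ : TopMeasure X)
    (ρ : QLF 𝔅) : Prop :=
  ∀ f ∈ C0S X, ∀ m : Measure ℝ, IsMfA μ f m → ρ.toFun f = ∫ t, t ∂m

/-- `ρ = ρ_μ` on `C_c(X)` (case (B)). -/
def ReprB {X : Type u} [TopologicalSpace X] {𝔅 : Set (X →ᵇ ℝ)} (μ : TopMeasure X)
    (ρ : QLF 𝔅) : Prop :=
  ∀ f ∈ CcS X, ∀ m : Measure ℝ, IsMfB μ f m → ρ.toFun f = ∫ t, t ∂m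


/-!
Let `ν(W) = μ(f⁻¹(W \ Z))` (`TopMeasure.mapCompl`), with `Z = ∅` in case (A) and `Z = {0}` in
case (B), and `F(a) = ν((a, ∞))`. Inner regularity of `μ` makes the antitone function `F`
right-continuous, so `-F` is a Stieltjes function, whose measure `m` satisfies
`m((a, b)) = F(a) - F(b⁻)`.

A topological measure is additive only on disjoint unions of open and compact sets. Since `f`
vanishes at infinity, `{f ≥ b}` for `b > 0` and `{f ≤ a}` for `a < 0` are compact, and splitting
`ν` along them, together with outer regularity (for `b > 0`) or inner regularity (for `b ≤ 0`),
gives `F(a) = ν((a, b)) + F(b⁻)`, i.e. `m = ν` on open intervals.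

Both `m` and `ν` commute with directed unions of open sets, because a compact set inside such a
union lies in one member. An open preconnected set is the directed union of the open intervals
between its points, and an open set is the directed union of the finite (disjoint) unions of its
components, so `m = ν` on all open sets.
-/

section

variable {X : Type*} [TopologicalSpace X]

lemma apply_iUnion_le_iSup_of_directed {ι : Type*} [Nonempty ι] {φ : Set X → ℝ≥0∞}
    {U : ι → Set X} (hU : ∀ i, IsOpen (U i)) (hd : Directed (· ⊆ ·) U)
    (hinner : ∀ r < φ (⋃ i, U i), ∃ K ⊆ ⋃ i, U i, IsCompact K ∧ r < φ K)
    (hmono : ∀ K i, IsCompact K → K ⊆ U i → φ K ≤ φ (U i)) :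
    φ (⋃ i, U i) ≤ ⨆ i, φ (U i) := by
  refine le_of_forall_lt fun r hr => ?_
  obtain ⟨K, hKU, hK, hrK⟩ := hinner r hr
  obtain ⟨i, hKi⟩ := hK.elim_directed_cover U hU hKU hd
  exact hrK.trans_le ((hmono K i hK hKi).trans (le_iSup (fun i => φ (U i)) i))

lemma measure_iUnion_eq_iSup_of_directed_isOpen {ι : Type*} [Nonempty ι] [MeasurableSpace X]
    (m : Measure X) [m.Regular] {U : ι → Set X} (hU : ∀ i, IsOpen (U i))
    (hd : Directed (· ⊆ ·) U) :
    m (⋃ i, U i) = ⨆ i, m (U i) :=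
  le_antisymm
    (apply_iUnion_le_iSup_of_directed hU hd
      (fun _ hr => (isOpen_iUnion hU).exists_lt_isCompact hr) fun _ _ _ h => measure_mono h)
    (iSup_le fun i => measure_mono (subset_iUnion U i))

lemma IsCompact.exists_lt_forall_lt {K : Set X} (hK : IsCompact K) {g : X → ℝ}
    (hg : Continuous g) {b : ℝ} (h : ∀ x ∈ K, g x < b) : ∃ t < b, ∀ x ∈ K, g x < t := by
  rcases K.eq_empty_or_nonempty with rfl | hne
  · exact ⟨b - 1, sub_one_lt b, by simp⟩
  obtain ⟨x₀, hx₀, hmax⟩ := hK.exists_isMaxOn hne hg.continuousOn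
  have := h x₀ hx₀
  exact ⟨(g x₀ + b) / 2, by linarith, fun x hx => by linarith [isMaxOn_iff.mp hmax x hx]⟩

lemma IsCompact.exists_gt_forall_gt {K : Set X} (hK : IsCompact K) {g : X → ℝ}
    (hg : Continuous g) {a : ℝ} (h : ∀ x ∈ K, a < g x) : ∃ t > a, ∀ x ∈ K, t < g x := by
  obtain ⟨t, hta, hKt⟩ := hK.exists_lt_forall_lt hg.neg fun x hx => neg_lt_neg (h x hx)
  exact ⟨-t, by linarith, fun x hx => by linarith [show -g x < t from hKt x hx]⟩

lemma isCompact_preimage_of_tendsto_cocompact {Y : Type*} [TopologicalSpace Y] {f : X → Y}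
    {y : Y} (hf : Continuous f) (hy : Tendsto f (cocompact X) (𝓝 y)) {C : Set Y}
    (hC : IsClosed C) (hyC : y ∉ C) : IsCompact (f ⁻¹' C) := by
  obtain ⟨K, hK, hCK⟩ := mem_cocompact'.mp (hy (hC.isOpen_compl.mem_nhds hyC))
  exact hK.of_isClosed_subset (hC.preimage hf) (by rwa [preimage_compl, compl_compl] at hCK)

lemma pairwiseDisjoint_range_connectedComponentIn (W : Set X) :
    (range (connectedComponentIn W)).PairwiseDisjoint id := by
  rintro _ ⟨x, rfl⟩ _ ⟨y, rfl⟩ hxy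
  refine disjoint_left.mpr fun z hzx hzy => hxy ?_
  rw [connectedComponentIn_eq hzx, connectedComponentIn_eq hzy]

lemma iUnion_finset_connectedComponentIn (W : Set X) :
    ⋃ s : Finset X, ⋃ x ∈ s, connectedComponentIn W x = W := by
  refine subset_antisymm (iUnion_subset fun s => iUnion₂_subset fun x _ =>
    connectedComponentIn_subset W x) fun x hx => ?_
  exact mem_iUnion.mpr ⟨{x}, by simpa using mem_connectedComponentIn hx⟩

end

lemma IsOpen.iUnion_Ioo_of_isPreconnected {C : Set ℝ} (hC : IsOpen C)
    (hCc : IsPreconnected C) : ⋃ p : C × C, Ioo (p.1 : ℝ) p.2 = C := by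
  refine subset_antisymm
    (iUnion_subset fun p => Ioo_subset_Icc_self.trans (hCc.Icc_subset p.1.2 p.2.2))
    fun x hx => ?_
  obtain ⟨ε, hε, hball⟩ := Metric.isOpen_iff.mp hC x hx
  rw [Real.ball_eq_Ioo] at hball
  have hl : x - ε / 2 ∈ C := hball ⟨by linarith, by linarith⟩
  have hu : x + ε / 2 ∈ C := hball ⟨by linarith, by linarith⟩
  exact mem_iUnion.mpr ⟨(⟨_, hl⟩, ⟨_, hu⟩), by simp only [mem_Ioo]; constructor <;> linarith⟩

lemma directed_Ioo_prod (C : Set ℝ) : Directed (· ⊆ ·) fun p : C × C => Ioo (p.1 : ℝ) p.2 :=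
  fun p q => ⟨(min p.1 q.1, max p.2 q.2),
    Ioo_subset_Ioo (min_le_left p.1 q.1) (le_max_left p.2 q.2),
    Ioo_subset_Ioo (min_le_right p.1 q.1) (le_max_right p.2 q.2)⟩

lemma sdiff_eq_left_of_subset_zero {s Z : Set ℝ} (hZ : Z ⊆ {0}) (hs : (0 : ℝ) ∉ s) :
    s \ Z = s :=
  sdiff_eq_left.mpr <| disjoint_left.mpr fun _ hxs hxZ =>
    hs (mem_singleton_iff.mp (hZ hxZ) ▸ hxs)

lemma isOpen_preimage_sdiff {X : Type*} [TopologicalSpace X] {f : X → ℝ} {Z W : Set ℝ}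
    (hf : Continuous f) (hZ : Z ⊆ {0}) (hW : IsOpen W) : IsOpen (f ⁻¹' (W \ Z)) :=
  (hW.sdiff ((finite_singleton 0).subset hZ).isClosed).preimage hf

namespace TopMeasure

variable {X : Type u} [TopologicalSpace X] (μ : TopMeasure X)

lemma apply_mono_isCompact_isOpen {K U : Set X} (hK : IsCompact K) (hU : IsOpen U)
    (hKU : K ⊆ U) : μ.toFun K ≤ μ.toFun U := by
  rw [μ.tm2 U hU]
  exact le_biSup μ.toFun ⟨hK, hKU⟩

lemma apply_mono_isOpen {U V : Set X} (hU : IsOpen U) (hV : IsOpen V) (hUV : U ⊆ V) :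
    μ.toFun U ≤ μ.toFun V := by
  rw [μ.tm2 U hU]
  exact iSup₂_le fun K hK => μ.apply_mono_isCompact_isOpen hK.1 hV (hK.2.trans hUV)

lemma apply_mono_isClosed_isOpen {F U : Set X} (hF : IsClosed F) (hU : IsOpen U)
    (hFU : F ⊆ U) : μ.toFun F ≤ μ.toFun U := by
  rw [μ.tm3 F hF]
  exact biInf_le _ ⟨hU, hFU⟩

lemma apply_mono_isCompact_isClosed {K F : Set X} (hK : IsCompact K) (hF : IsClosed F)
    (hKF : K ⊆ F) : μ.toFun K ≤ μ.toFun F := by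
  rw [μ.tm3 F hF]
  exact le_iInf₂ fun U hU => μ.apply_mono_isCompact_isOpen hK hU.1 (hKF.trans hU.2)

lemma apply_mono_isOpen_isClosed {U F : Set X} (hU : IsOpen U) (hF : IsClosed F)
    (hUF : U ⊆ F) : μ.toFun U ≤ μ.toFun F := by
  rw [μ.tm2 U hU]
  exact iSup₂_le fun K hK => μ.apply_mono_isCompact_isClosed hK.1 hF (hK.2.trans hUF)

lemma apply_empty : μ.toFun ∅ = 0 := by
  have hfin : μ.toFun ∅ ≠ ∞ := by
    obtain ⟨A, hA | hA, hA_fin⟩ := μ.not_all_top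
    · exact ne_top_of_le_ne_top hA_fin (μ.apply_mono_isOpen isOpen_empty hA (empty_subset A))
    · exact ne_top_of_le_ne_top hA_fin
        (μ.apply_mono_isOpen_isClosed isOpen_empty hA (empty_subset A))
  have h := μ.tm1 ∅ ∅ (disjoint_empty ∅) (.inl isOpen_empty) (.inl isOpen_empty)
    (.inl (by simp))
  rw [union_empty] at h
  exact (ENNReal.add_right_inj hfin).mp (h.symm.trans (add_zero _).symm)

lemma apply_union_isOpen_isCompact {U K : Set X} (hU : IsOpen U) (hK : IsCompact K)
    (hUK : Disjoint U K) (h : IsOpen (U ∪ K)) :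
    μ.toFun (U ∪ K) = μ.toFun U + μ.toFun K :=
  μ.tm1 U K hUK (.inl hU) (.inr hK) (.inl h)

lemma apply_biUnion_finset {ι : Type*} {s : Finset ι} {U : ι → Set X}
    (hU : ∀ i ∈ s, IsOpen (U i)) (hd : (s : Set ι).PairwiseDisjoint U) :
    μ.toFun (⋃ i ∈ s, U i) = ∑ i ∈ s, μ.toFun (U i) := by
  classical
  induction s using Finset.induction_on with
  | empty => simpa using μ.apply_empty
  | insert i s hi ih =>
    rw [Finset.coe_insert, pairwiseDisjoint_insert] at hd
    have hs : ∀ j ∈ s, IsOpen (U j) := fun j hj => hU j (Finset.mem_insert_of_mem hj)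
    have hUi : IsOpen (U i) := hU i (Finset.mem_insert_self i s)
    have hUs : IsOpen (⋃ j ∈ s, U j) := isOpen_biUnion hs
    rw [Finset.set_biUnion_insert, Finset.sum_insert hi, ← ih hs hd.1]
    refine μ.tm1 _ _ ?_ (.inl hUi) (.inl hUs) (.inl (hUi.union hUs))
    exact disjoint_iUnion₂_right.mpr fun j hj => hd.2 j hj fun hij => hi (hij ▸ hj)

lemma apply_iUnion_of_directed {ι : Type*} [Nonempty ι] {U : ι → Set X}
    (hU : ∀ i, IsOpen (U i)) (hd : Directed (· ⊆ ·) U) :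
    μ.toFun (⋃ i, U i) = ⨆ i, μ.toFun (U i) := by
  refine le_antisymm (apply_iUnion_le_iSup_of_directed hU hd (fun r hr => ?_)
    fun K i hK hKi => μ.apply_mono_isCompact_isOpen hK (hU i) hKi)
    (iSup_le fun i => μ.apply_mono_isOpen (hU i) (isOpen_iUnion hU) (subset_iUnion U i))
  rw [μ.tm2 _ (isOpen_iUnion hU)] at hr
  obtain ⟨K, ⟨hK, hKU⟩, hrK⟩ := lt_biSup_iff.mp hr
  exact ⟨K, hKU, hK, hrK⟩

lemma iSup_apply_preimage_Iic {f : X → ℝ} (hf : Continuous f) (b : ℝ) :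
    ⨆ t ∈ Iio b, μ.toFun (f ⁻¹' Iic t) = μ.toFun (f ⁻¹' Iio b) := by
  have hopen : ∀ t, IsOpen (f ⁻¹' Iio t) := fun t => isOpen_Iio.preimage hf
  have hclosed : ∀ t, IsClosed (f ⁻¹' Iic t) := fun t => isClosed_Iic.preimage hf
  refine le_antisymm (iSup₂_le fun t ht => μ.apply_mono_isClosed_isOpen (hclosed t) (hopen b)
    (preimage_mono (Iic_subset_Iio.mpr ht))) ?_
  rw [μ.tm2 _ (hopen b)]
  refine iSup₂_le fun K ⟨hK, hKb⟩ => ?_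
  obtain ⟨t, htb, hKt⟩ := hK.exists_lt_forall_lt hf fun x hx => hKb hx
  calc μ.toFun K ≤ μ.toFun (f ⁻¹' Iio t) :=
        μ.apply_mono_isCompact_isOpen hK (hopen t) fun x hx => hKt x hx
    _ ≤ μ.toFun (f ⁻¹' Iic t) :=
        μ.apply_mono_isOpen_isClosed (hopen t) (hclosed t) (preimage_mono Iio_subset_Iic_self)
    _ ≤ ⨆ t ∈ Iio b, μ.toFun (f ⁻¹' Iic t) := le_biSup (fun t => μ.toFun (f ⁻¹' Iic t)) htb

noncomputable def mapCompl (f : X → ℝ) (Z W : Set ℝ) : ℝ≥0∞ :=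
  μ.toFun (f ⁻¹' (W \ Z))

noncomputable def distribution (f : X → ℝ) (Z : Set ℝ) (a : ℝ) : ℝ≥0∞ :=
  μ.mapCompl f Z (Ioi a)

variable {μ} {f : X → ℝ} {Z : Set ℝ}

lemma mapCompl_empty : μ.mapCompl f Z ∅ = 0 := by
  rw [mapCompl, empty_sdiff, preimage_empty, μ.apply_empty]

lemma mapCompl_compl_closure_range : μ.mapCompl f Z (closure (range f))ᶜ = 0 := by
  rw [mapCompl, ← μ.apply_empty]
  congr 1
  exact eq_empty_iff_forall_notMem.mpr fun x hx => hx.1 (subset_closure (mem_range_self x))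

lemma mapCompl_mono (hf : Continuous f) (hZ : Z ⊆ {0}) {W₁ W₂ : Set ℝ} (h₁ : IsOpen W₁)
    (h₂ : IsOpen W₂) (h : W₁ ⊆ W₂) : μ.mapCompl f Z W₁ ≤ μ.mapCompl f Z W₂ :=
  μ.apply_mono_isOpen (isOpen_preimage_sdiff hf hZ h₁) (isOpen_preimage_sdiff hf hZ h₂)
    (preimage_mono (sdiff_subset_sdiff_left h))

lemma mapCompl_biUnion_finset (hf : Continuous f) (hZ : Z ⊆ {0}) {T : Finset (Set ℝ)}
    (hT : ∀ C ∈ T, IsOpen C) (hd : (T : Set (Set ℝ)).PairwiseDisjoint id) :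
    μ.mapCompl f Z (⋃ C ∈ T, C) = ∑ C ∈ T, μ.mapCompl f Z C := by
  have hpre : f ⁻¹' ((⋃ C ∈ T, C) \ Z) = ⋃ C ∈ T, f ⁻¹' (C \ Z) := by
    simp only [iUnion_sdiff, preimage_iUnion]
  rw [mapCompl, hpre]
  exact μ.apply_biUnion_finset (fun C hC => isOpen_preimage_sdiff hf hZ (hT C hC))
    fun C hC D hD hCD => ((hd hC hD hCD).mono sdiff_subset sdiff_subset).preimage f

lemma mapCompl_iUnion_of_directed (hf : Continuous f) (hZ : Z ⊆ {0}) {ι : Type*} [Nonempty ι]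
    {V : ι → Set ℝ} (hV : ∀ i, IsOpen (V i)) (hd : Directed (· ⊆ ·) V) :
    μ.mapCompl f Z (⋃ i, V i) = ⨆ i, μ.mapCompl f Z (V i) := by
  rw [mapCompl, iUnion_sdiff, preimage_iUnion]
  exact μ.apply_iUnion_of_directed (fun i => isOpen_preimage_sdiff hf hZ (hV i))
    (hd.mono_comp (· ⊆ ·) (g := fun W => f ⁻¹' (W \ Z))
      fun _ _ h => preimage_mono (sdiff_subset_sdiff_left h))

lemma measure_eq_mapCompl_iUnion (hf : Continuous f) (hZ : Z ⊆ {0}) (m : Measure ℝ)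
    [m.Regular] {ι : Type*} [Nonempty ι] {V : ι → Set ℝ} (hV : ∀ i, IsOpen (V i))
    (hd : Directed (· ⊆ ·) V) (h : ∀ i, m (V i) = μ.mapCompl f Z (V i)) :
    m (⋃ i, V i) = μ.mapCompl f Z (⋃ i, V i) := by
  rw [measure_iUnion_eq_iSup_of_directed_isOpen m hV hd, mapCompl_iUnion_of_directed hf hZ hV hd]
  exact iSup_congr h

lemma distribution_antitone (hf : Continuous f) (hZ : Z ⊆ {0}) :
    Antitone (μ.distribution f Z) := fun _ _ hab =>
  mapCompl_mono hf hZ isOpen_Ioi isOpen_Ioi (Ioi_subset_Ioi hab)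

lemma distribution_ne_top (hf : Continuous f) (hZ : Z ⊆ {0})
    (hfin : μ.mapCompl f Z univ ≠ ∞) (a : ℝ) : μ.distribution f Z a ≠ ∞ :=
  ne_top_of_le_ne_top hfin (mapCompl_mono hf hZ isOpen_Ioi isOpen_univ (subset_univ _))

lemma distribution_eq_iSup_Ioi (hf : Continuous f) (hZ : Z ⊆ {0}) (a : ℝ) :
    μ.distribution f Z a = ⨆ t ∈ Ioi a, μ.distribution f Z t := by
  refine le_antisymm ?_ (iSup₂_le fun t ht => distribution_antitone hf hZ (le_of_lt ht))
  rw [distribution, mapCompl, μ.tm2 _ (isOpen_preimage_sdiff hf hZ isOpen_Ioi)]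
  refine iSup₂_le fun K ⟨hK, hKa⟩ => ?_
  obtain ⟨t, hat, hKt⟩ := hK.exists_gt_forall_gt hf fun x hx => (hKa hx).1
  calc μ.toFun K ≤ μ.distribution f Z t :=
        μ.apply_mono_isCompact_isOpen hK (isOpen_preimage_sdiff hf hZ isOpen_Ioi)
          fun x hx => ⟨hKt x hx, (hKa hx).2⟩
    _ ≤ ⨆ t ∈ Ioi a, μ.distribution f Z t := le_biSup (μ.distribution f Z) hat

lemma mapCompl_union (hf : Continuous f) (hf0 : Tendsto f (cocompact X) (𝓝 0))
    (hZ : Z ⊆ {0}) {s t : Set ℝ} (hs : IsOpen s) (ht : IsClosed t) (ht0 : (0 : ℝ) ∉ t)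
    (hst : Disjoint s t) (hst' : IsOpen (s ∪ t)) :
    μ.mapCompl f Z (s ∪ t) = μ.mapCompl f Z s + μ.toFun (f ⁻¹' t) := by
  have hpre : f ⁻¹' ((s ∪ t) \ Z) = f ⁻¹' (s \ Z) ∪ f ⁻¹' t := by
    rw [union_sdiff_distrib, sdiff_eq_left_of_subset_zero hZ ht0, preimage_union]
  rw [mapCompl, mapCompl, hpre]
  exact μ.apply_union_isOpen_isCompact (isOpen_preimage_sdiff hf hZ hs)
    (isCompact_preimage_of_tendsto_cocompact hf hf0 ht ht0)
    ((hst.mono_left sdiff_subset).preimage f) (hpre ▸ isOpen_preimage_sdiff hf hZ hst')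

lemma iInf_distribution_of_pos (hf : Continuous f) (hf0 : Tendsto f (cocompact X) (𝓝 0))
    (hZ : Z ⊆ {0}) {b : ℝ} (hb : 0 < b) :
    ⨅ t ∈ Iio b, μ.distribution f Z t = μ.toFun (f ⁻¹' Ici b) := by
  have hopen : ∀ t, IsOpen (f ⁻¹' (Ioi t \ Z)) := fun t =>
    isOpen_preimage_sdiff hf hZ isOpen_Ioi
  refine le_antisymm ?_ (le_iInf₂ fun t ht => μ.apply_mono_isCompact_isOpen
    (isCompact_preimage_of_tendsto_cocompact hf hf0 isClosed_Ici (notMem_Ici.mpr hb)) (hopen t)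
    fun x (hx : b ≤ f x) => ⟨ht.trans_le hx, fun hxZ => (hb.trans_le hx).ne' (hZ hxZ)⟩)
  rw [μ.tm3 _ (isClosed_Ici.preimage hf)]
  refine le_iInf₂ fun U ⟨hU, hbU⟩ => ?_
  -- `f < b` on the compact set `{f ≥ b / 2} \ U`, so already `{f > t} ⊆ U` for some `t < b`.
  have hK : IsCompact (f ⁻¹' Ici (b / 2) \ U) :=
    (isCompact_preimage_of_tendsto_cocompact hf hf0 isClosed_Ici
      (notMem_Ici.mpr (half_pos hb))).diff hU
  obtain ⟨t, htb, hKt⟩ := hK.exists_lt_forall_lt hf fun x hx =>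
    lt_of_not_ge fun hbx => hx.2 (hbU hbx)
  calc ⨅ t ∈ Iio b, μ.distribution f Z t ≤ μ.distribution f Z (max t (b / 2)) :=
        biInf_le _ (max_lt htb (half_lt_self hb))
    _ ≤ μ.toFun U := μ.apply_mono_isOpen (hopen _) hU fun x hx => by
        by_contra hxU
        have hx' : max t (b / 2) < f x := hx.1
        exact lt_asymm (hKt x ⟨(le_max_right t (b / 2)).trans hx'.le, hxU⟩)
          ((le_max_left t (b / 2)).trans_lt hx')

lemma mapCompl_univ_eq_distribution_add (hf : Continuous f)
    (hf0 : Tendsto f (cocompact X) (𝓝 0)) (hZ : Z ⊆ {0}) {t : ℝ} (ht : t < 0) :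
    μ.mapCompl f Z univ = μ.distribution f Z t + μ.toFun (f ⁻¹' Iic t) := by
  rw [distribution, ← mapCompl_union hf hf0 hZ isOpen_Ioi isClosed_Iic (notMem_Iic.mpr ht)
    (Iic_disjoint_Ioi le_rfl).symm (by rw [union_comm, Iic_union_Ioi]; exact isOpen_univ),
    union_comm, Iic_union_Ioi]

lemma iInf_distribution_add_of_nonpos (hf : Continuous f)
    (hf0 : Tendsto f (cocompact X) (𝓝 0)) (hZ : Z ⊆ {0}) (hfin : μ.mapCompl f Z univ ≠ ∞)
    {b : ℝ} (hb : b ≤ 0) :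
    (⨅ t ∈ Iio b, μ.distribution f Z t) + μ.mapCompl f Z (Iio b) = μ.mapCompl f Z univ := by
  have hsplit : ∀ t : Iio b, μ.mapCompl f Z univ =
      μ.distribution f Z t + μ.toFun (f ⁻¹' Iic t) := fun t =>
    mapCompl_univ_eq_distribution_add hf hf0 hZ (t.2.trans_le hb)
  have hIic : ∀ t : Iio b, μ.toFun (f ⁻¹' Iic t) ≤ μ.mapCompl f Z univ := fun t =>
    (hsplit t).symm ▸ le_add_self
  have : Nonempty (Iio b) := ⟨⟨b - 1, sub_one_lt b⟩⟩
  rw [mapCompl, sdiff_eq_left_of_subset_zero hZ (notMem_Iio.mpr hb),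
    ← μ.iSup_apply_preimage_Iic hf, iSup_subtype', iInf_subtype']
  calc (⨅ t : Iio b, μ.distribution f Z t) + ⨆ t : Iio b, μ.toFun (f ⁻¹' Iic t)
      = (⨅ t : Iio b, (μ.mapCompl f Z univ - μ.toFun (f ⁻¹' Iic t))) +
          ⨆ t : Iio b, μ.toFun (f ⁻¹' Iic t) := by
        congr 1
        exact iInf_congr fun t => ENNReal.eq_sub_of_add_eq
          (ne_top_of_le_ne_top hfin (hIic t)) (hsplit t).symm
    _ = μ.mapCompl f Z univ := by
        rw [← ENNReal.sub_iSup hfin, tsub_add_cancel_of_le (iSup_le hIic)]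

lemma distribution_eq_add_iInf (hf : Continuous f) (hf0 : Tendsto f (cocompact X) (𝓝 0))
    (hZ : Z ⊆ {0}) (hfin : μ.mapCompl f Z univ ≠ ∞) {a b : ℝ} (hab : a < b) :
    μ.distribution f Z a = μ.mapCompl f Z (Ioo a b) + ⨅ t ∈ Iio b, μ.distribution f Z t := by
  rcases lt_or_ge 0 b with hb | hb
  · rw [iInf_distribution_of_pos hf hf0 hZ hb, distribution, ← Ioo_union_Ici_eq_Ioi hab]
    exact mapCompl_union hf hf0 hZ isOpen_Ioo isClosed_Ici (notMem_Ici.mpr hb)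
      ((Iio_disjoint_Ici le_rfl).mono_left Ioo_subset_Iio_self)
      (by rw [Ioo_union_Ici_eq_Ioi hab]; exact isOpen_Ioi)
  have ha : a < 0 := hab.trans_le hb
  have hIio : μ.mapCompl f Z (Iio b) = μ.mapCompl f Z (Ioo a b) + μ.toFun (f ⁻¹' Iic a) := by
    rw [← Iic_union_Ioo_eq_Iio hab, union_comm]
    exact mapCompl_union hf hf0 hZ isOpen_Ioo isClosed_Iic (notMem_Iic.mpr ha)
      ((Iic_disjoint_Ioi le_rfl).symm.mono_left Ioo_subset_Ioi_self)
      (by rw [union_comm, Iic_union_Ioo_eq_Iio hab]; exact isOpen_Iio)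
  have hsplit := mapCompl_univ_eq_distribution_add (μ := μ) hf hf0 hZ ha
  have hc : μ.toFun (f ⁻¹' Iic a) ≠ ∞ := ne_top_of_le_ne_top hfin (hsplit ▸ le_add_self)
  refine (ENNReal.add_left_inj hc).mp ?_
  rw [← hsplit, ← iInf_distribution_add_of_nonpos hf hf0 hZ hfin hb, hIio]
  ac_rfl

noncomputable def distributionStieltjes (hf : Continuous f) (hZ : Z ⊆ {0})
    (hfin : μ.mapCompl f Z univ ≠ ∞) : StieltjesFunction ℝ where
  toFun a := -(μ.distribution f Z a).toReal
  mono' _ _ hab := neg_le_neg <| (ENNReal.toReal_le_toReal (distribution_ne_top hf hZ hfin _)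
    (distribution_ne_top hf hZ hfin _)).mpr (distribution_antitone hf hZ hab)
  right_continuous' a := by
    rw [← continuousWithinAt_Ioi_iff_Ici]
    have h := (distribution_antitone (μ := μ) hf hZ).tendsto_nhdsGT a
    rw [sSup_image, ← distribution_eq_iSup_Ioi hf hZ] at h
    exact ((ENNReal.tendsto_toReal (distribution_ne_top hf hZ hfin a)).comp h).neg

lemma iInf_distribution_ne_top (hf : Continuous f) (hZ : Z ⊆ {0})
    (hfin : μ.mapCompl f Z univ ≠ ∞) (b : ℝ) : ⨅ t ∈ Iio b, μ.distribution f Z t ≠ ∞ :=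
  ne_top_of_le_ne_top (distribution_ne_top hf hZ hfin (b - 1)) (biInf_le _ (sub_one_lt b))

lemma leftLim_distributionStieltjes (hf : Continuous f) (hZ : Z ⊆ {0})
    (hfin : μ.mapCompl f Z univ ≠ ∞) (b : ℝ) :
    Function.leftLim (distributionStieltjes hf hZ hfin) b =
      -(⨅ t ∈ Iio b, μ.distribution f Z t).toReal := by
  apply leftLim_eq_of_tendsto
  have h := (distribution_antitone (μ := μ) hf hZ).tendsto_nhdsLT b
  rw [sInf_image] at h
  exact ((ENNReal.tendsto_toReal (iInf_distribution_ne_top hf hZ hfin b)).comp h).neg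

lemma isFiniteMeasure_distributionStieltjes (hf : Continuous f) (hZ : Z ⊆ {0})
    (hfin : μ.mapCompl f Z univ ≠ ∞) :
    IsFiniteMeasure (distributionStieltjes hf hZ hfin).measure := by
  refine StieltjesFunction.isFiniteMeasure_of_forall_abs_le _
    (C := (μ.mapCompl f Z univ).toReal) fun a => ?_
  rw [show distributionStieltjes hf hZ hfin a = -(μ.distribution f Z a).toReal from rfl,
    abs_neg, abs_of_nonneg ENNReal.toReal_nonneg]
  exact ENNReal.toReal_mono hfin (mapCompl_mono hf hZ isOpen_Ioi isOpen_univ (subset_univ _))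

lemma distributionStieltjes_measure_Ioo (hf : Continuous f)
    (hf0 : Tendsto f (cocompact X) (𝓝 0)) (hZ : Z ⊆ {0}) (hfin : μ.mapCompl f Z univ ≠ ∞)
    (a b : ℝ) :
    (distributionStieltjes hf hZ hfin).measure (Ioo a b) = μ.mapCompl f Z (Ioo a b) := by
  rcases le_or_gt b a with hba | hab
  · rw [Ioo_eq_empty (not_lt.mpr hba), measure_empty, mapCompl_empty]
  have hFa := distribution_ne_top hf hZ hfin a
  rw [StieltjesFunction.measure_Ioo, leftLim_distributionStieltjes,
    show distributionStieltjes hf hZ hfin a = -(μ.distribution f Z a).toReal from rfl,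
    neg_sub_neg, ← ENNReal.toReal_sub_of_le (biInf_le _ (show a ∈ Iio b from hab)) hFa,
    ENNReal.ofReal_toReal (ENNReal.sub_ne_top hFa)]
  exact ENNReal.sub_eq_of_eq_add (iInf_distribution_ne_top hf hZ hfin b)
    (distribution_eq_add_iInf hf hf0 hZ hfin hab)

lemma distributionStieltjes_measure_of_isPreconnected (hf : Continuous f)
    (hf0 : Tendsto f (cocompact X) (𝓝 0)) (hZ : Z ⊆ {0}) (hfin : μ.mapCompl f Z univ ≠ ∞)
    {C : Set ℝ} (hC : IsOpen C) (hCc : IsPreconnected C) :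
    (distributionStieltjes hf hZ hfin).measure C = μ.mapCompl f Z C := by
  rcases C.eq_empty_or_nonempty with rfl | ⟨x, hx⟩
  · rw [measure_empty, mapCompl_empty]
  have : Nonempty (C × C) := ⟨(⟨x, hx⟩, ⟨x, hx⟩)⟩
  rw [← hC.iUnion_Ioo_of_isPreconnected hCc]
  exact measure_eq_mapCompl_iUnion hf hZ _ (fun _ => isOpen_Ioo) (directed_Ioo_prod C)
    fun p => distributionStieltjes_measure_Ioo hf hf0 hZ hfin _ _

lemma distributionStieltjes_measure_of_isOpen (hf : Continuous f)
    (hf0 : Tendsto f (cocompact X) (𝓝 0)) (hZ : Z ⊆ {0}) (hfin : μ.mapCompl f Z univ ≠ ∞)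
    {W : Set ℝ} (hW : IsOpen W) :
    (distributionStieltjes hf hZ hfin).measure W = μ.mapCompl f Z W := by
  classical
  rw [← iUnion_finset_connectedComponentIn W]
  refine measure_eq_mapCompl_iUnion hf hZ _
    (fun s => isOpen_biUnion fun x _ => hW.connectedComponentIn)
    (Monotone.directed_le fun s t hst => biUnion_subset_biUnion_left hst) fun s => ?_
  set T := s.image (connectedComponentIn W)
  have hT : (T : Set (Set ℝ)).PairwiseDisjoint id :=
    (pairwiseDisjoint_range_connectedComponentIn W).subset (by simp [T])
  have hopen : ∀ C ∈ T, IsOpen C := by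
    simp only [T, Finset.mem_image]
    rintro _ ⟨x, -, rfl⟩
    exact hW.connectedComponentIn
  have hunion : ⋃ x ∈ s, connectedComponentIn W x = ⋃ C ∈ T, C := by
    rw [Finset.set_biUnion_finset_image]
  rw [hunion, mapCompl_biUnion_finset hf hZ hopen hT]
  refine (measure_biUnion_finset hT fun C hC => (hopen C hC).measurableSet).trans
    (Finset.sum_congr rfl fun C hC => ?_)
  obtain ⟨x, -, rfl⟩ := Finset.mem_image.mp hC
  exact distributionStieltjes_measure_of_isPreconnected hf hf0 hZ hfin hW.connectedComponentIn
    isPreconnected_connectedComponentIn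

theorem exists_measure_eq_mapCompl (hf : Continuous f) (hf0 : Tendsto f (cocompact X) (𝓝 0))
    (hZ : Z ⊆ {0}) (hfin : μ.mapCompl f Z univ ≠ ∞) :
    ∃ m : Measure ℝ, IsFiniteMeasure m ∧ ∀ W, IsOpen W → m W = μ.mapCompl f Z W :=
  ⟨_, isFiniteMeasure_distributionStieltjes hf hZ hfin,
    fun _ hW => distributionStieltjes_measure_of_isOpen hf hf0 hZ hfin hW⟩

end TopMeasure

theorem exists_mf_general {X : Type u} [TopologicalSpace X]
    (μ : TopMeasure X) :
    (∀ f : X →ᵇ ℝ, μ.toFun Set.univ ≠ ∞ → f ∈ C0S X →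
      ∃ m : Measure ℝ, IsFiniteMeasure m ∧ IsMfA μ f m ∧
        (∀ a : ℝ, m (Set.Ioi a) = μ.toFun ((f : X → ℝ) ⁻¹' Set.Ioi a)) ∧
        m (closure (Set.range (f : X → ℝ)))ᶜ = 0) ∧
    (∀ f : X →ᵇ ℝ, μ.CompactFinite → f ∈ CcS X →
      ∃ m : Measure ℝ, (∀ K : Set ℝ, IsCompact K → m K ≠ ∞) ∧ IsMfB μ f m ∧
        (∀ W : Set ℝ, IsOpen W → W ⊆ {(0 : ℝ)}ᶜ → m W = μ.toFun ((f : X → ℝ) ⁻¹' W)) ∧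
        (∀ a : ℝ, m (Set.Ioi a) = μ.toFun ((f : X → ℝ) ⁻¹' (Set.Ioi a \ {0}))) ∧
        m (closure (Set.range (f : X → ℝ)))ᶜ = 0) := by
  refine ⟨fun f hμ hf => ?_, fun f hμ hf => ?_⟩
  · obtain ⟨m, hm, hmW⟩ := TopMeasure.exists_measure_eq_mapCompl (Z := ∅) f.continuous hf
      (empty_subset _) (by rwa [TopMeasure.mapCompl, sdiff_empty, preimage_univ])
    have hmf : IsMfA μ f m := fun W hW => by rw [hmW W hW, TopMeasure.mapCompl, sdiff_empty]
    exact ⟨m, hm, hmf, fun a => hmf _ isOpen_Ioi,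
      (hmW _ isClosed_closure.isOpen_compl).trans TopMeasure.mapCompl_compl_closure_range⟩
  · have hfin : μ.mapCompl f {0} univ ≠ ∞ :=
      ne_top_of_le_ne_top (hμ _ hf) (μ.apply_mono_isOpen_isClosed
        (isOpen_preimage_sdiff f.continuous subset_rfl isOpen_univ) (isClosed_tsupport _)
        fun x hx => subset_tsupport _ hx.2)
    obtain ⟨m, hm, hmW⟩ := TopMeasure.exists_measure_eq_mapCompl f.continuous
      (HasCompactSupport.is_zero_at_infty hf) subset_rfl hfin
    refine ⟨m, fun K _ => measure_ne_top m K, hmW, fun W hW hW0 => ?_,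
      fun a => hmW _ isOpen_Ioi,
      (hmW _ isClosed_closure.isOpen_compl).trans TopMeasure.mapCompl_compl_closure_range⟩
    rw [hmW W hW, TopMeasure.mapCompl,
      sdiff_eq_left_of_subset_zero subset_rfl fun h => hW0 h rfl]

/-- existence of the measure `m_f` on `ℝ`. (A) If `μ(X) < ∞` and `f ∈ C₀(X)`
there is a finite Borel measure `m` with `m(W) = μ(f⁻¹(W))` for all open `W ⊆ ℝ`;
(B) if `μ` is compact-finite and `f ∈ C_c(X)` there is a compact-finite Borel measure `m`
with `m(W) = μ(f⁻¹(W \ {0}))` for all open `W ⊆ ℝ`, hence `m(W) = μ(f⁻¹(W))` for open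
`W ⊆ ℝ \ {0}`. In either case `m` is the Stieltjes measure of the distribution function
(`m((a,∞)) = F(a)` for all `a`) and its support lies in the closure of `f(X)`. -/
theorem exists_mf {X : Type u} [TopologicalSpace X]
    [LocallyCompactSpace X] [T2Space X] [ConnectedSpace X] (μ : TopMeasure X) :
    (∀ f : X →ᵇ ℝ, μ.toFun Set.univ ≠ ∞ → f ∈ C0S X →
      ∃ m : Measure ℝ, IsFiniteMeasure m ∧ IsMfA μ f m ∧
        (∀ a : ℝ, m (Set.Ioi a) = μ.toFun ((f : X → ℝ) ⁻¹' Set.Ioi a)) ∧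
        m (closure (Set.range (f : X → ℝ)))ᶜ = 0) ∧
    (∀ f : X →ᵇ ℝ, μ.CompactFinite → f ∈ CcS X →
      ∃ m : Measure ℝ, (∀ K : Set ℝ, IsCompact K → m K ≠ ∞) ∧ IsMfB μ f m ∧
        (∀ W : Set ℝ, IsOpen W → W ⊆ {(0 : ℝ)}ᶜ → m W = μ.toFun ((f : X → ℝ) ⁻¹' W)) ∧
        (∀ a : ℝ, m (Set.Ioi a) = μ.toFun ((f : X → ℝ) ⁻¹' (Set.Ioi a \ {0}))) ∧
        m (closure (Set.range (f : X → ℝ)))ᶜ = 0) :=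
  exists_mf_general μ
end

section
/- Let X be a locally compact, Hausdorff, connected space, let ρ be a quasi-linear functional on C₀(X) or on C_c(X), and let μ_ρ be the associated set function. Then for every compact K ⊆ X: μ_ρ(K) = inf{ρ(g) : g ∈ C_c(X), g ≥ 1_K} = inf{ρ(g) : g ∈ C_c(X), 0 ≤ g ≤ 1, g = 1 on K}. In particular, μ_ρ(K) < ∞ for every compact K. -/
/-!
`ρ` is monotone on each `B(w)`, by positivity and additivity there, and `B(w)` contains `φ ∘ w`
for every continuous `φ` with `φ 0 = 0`. Given `g ≥ 1_K` and `0 < t < 1`, every `f` admissible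
for `μ_ρ({g > t})` satisfies `f ≤ h ≤ t⁻¹ g` with `h = min (t⁻¹ g) 1`; the first inequality
passes through `ρ` inside `B(f + h)`, the second inside `B(g)`. So `μ_ρ(K) ≤ ρ(g) / t`, and
`t → 1`. Conversely, a Urysohn function of `K` supported in an open `U ⊇ K` is admissible in
both infima, and `U = X` gives finiteness.
-/

open Set Filter Topology MeasureTheory
open scoped ENNReal BoundedContinuousFunction

universe u

section FunctionSpaces
variable {X : Type u} [TopologicalSpace X]

theorem CcS_subset_C0S : CcS X ⊆ C0S X := fun _ hf => HasCompactSupport.is_zero_at_infty hf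

theorem isSubalgS_C0S : IsSubalgS (C0S X) := by
  refine ⟨fun f g hf hg => ?_, fun f g hf hg => ?_, fun c f hf => ?_⟩
  · simpa [C0S, Pi.add_def] using hf.add hg
  · simpa [C0S, Pi.mul_def] using hf.mul hg
  · simpa [C0S] using hf.const_mul c

theorem isSubalgS_CcS : IsSubalgS (CcS X) := by
  refine ⟨fun f g hf hg => ?_, fun f g hf hg => ?_, fun c f hf => ?_⟩
  · exact HasCompactSupport.add hf hg
  · exact HasCompactSupport.mul_right hf
  · exact HasCompactSupport.smul_left (f := fun _ => c) hf

end FunctionSpaces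

section SinglyGenerated
variable {X : Type u} [TopologicalSpace X] {𝔅 : Set (X →ᵇ ℝ)}

theorem self_mem_sgen (h : X →ᵇ ℝ) : h ∈ sgen 𝔅 h := fun _ hS => hS.2.1

theorem add_mem_sgen {h f g : X →ᵇ ℝ} (hf : f ∈ sgen 𝔅 h) (hg : g ∈ sgen 𝔅 h) :
    f + g ∈ sgen 𝔅 h :=
  fun S hS => hS.2.2.1 f g (hf S hS) (hg S hS)

theorem smul_mem_sgen {h f : X →ᵇ ℝ} (c : ℝ) (hf : f ∈ sgen 𝔅 h) : c • f ∈ sgen 𝔅 h :=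
  fun S hS => hS.2.2.2.2.1 c f (hf S hS)

theorem sgen_subset (h𝔅 : IsSubalgS 𝔅) {h : X →ᵇ ℝ} (hh : h ∈ 𝔅) : sgen 𝔅 h ⊆ 𝔅 := by
  refine sInter_subset_of_mem ⟨subset_rfl, hh, h𝔅.1, h𝔅.2.1, h𝔅.2.2, ?_⟩
  simpa only [Subtype.coe_prop, ofPred_true] using isClosed_univ

theorem exists_mem_eq_eval_sub_eval_zero {S : Set (X →ᵇ ℝ)}
    (hadd : ∀ f g : X →ᵇ ℝ, f ∈ S → g ∈ S → f + g ∈ S)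
    (hmul : ∀ f g : X →ᵇ ℝ, f ∈ S → g ∈ S → f * g ∈ S)
    (hsmul : ∀ (c : ℝ) (f : X →ᵇ ℝ), f ∈ S → c • f ∈ S)
    {w : X →ᵇ ℝ} (hw : w ∈ S) (p : Polynomial ℝ) :
    ∃ G ∈ S, ∀ x, G x = p.eval (w x) - p.eval 0 := by
  have hpow : ∀ n : ℕ, w ^ (n + 1) ∈ S := by
    intro n
    induction n with
    | zero => simpa using hw
    | succ k ih => rw [pow_succ]; exact hmul _ _ ih hw
  induction p using Polynomial.induction_on' with
  | add p q hp hq =>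
    obtain ⟨Gp, hGp, hGpx⟩ := hp
    obtain ⟨Gq, hGq, hGqx⟩ := hq
    refine ⟨Gp + Gq, hadd _ _ hGp hGq, fun x => ?_⟩
    simp only [BoundedContinuousFunction.coe_add, Pi.add_apply, hGpx, hGqx, Polynomial.eval_add]
    ring
  | monomial n a =>
    cases n with
    | zero => exact ⟨(0 : ℝ) • w, hsmul 0 w hw, fun x => by simp⟩
    | succ k => exact ⟨a • w ^ (k + 1), hsmul a _ (hpow k), fun x => by simp⟩

/-- By Weierstrass, `φ ∘ w` is a uniform limit of polynomials in `w` without constant term. -/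
theorem mem_sgen_of_eq_comp {w F : X →ᵇ ℝ} (hF : F ∈ 𝔅) {φ : ℝ → ℝ} (hφ : Continuous φ)
    (hφ0 : φ 0 = 0) (hFw : ∀ x, F x = φ (w x)) : F ∈ sgen 𝔅 w := by
  rintro S ⟨hS𝔅, hwS, hadd, hmul, hsmul, hclosed⟩
  suffices (⟨F, hF⟩ : 𝔅) ∈ closure {G : 𝔅 | (G : X →ᵇ ℝ) ∈ S} from hclosed.closure_subset this
  rw [Metric.mem_closure_iff]
  intro ε hε
  have hw : ∀ x, w x ∈ Icc (-‖w‖) ‖w‖ := fun x => abs_le.mp (w.norm_coe_le_norm x)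
  obtain ⟨q, hq⟩ := exists_polynomial_near_of_continuousOn (-‖w‖) ‖w‖ φ hφ.continuousOn
    (ε / 4) (by positivity)
  obtain ⟨G, hGS, hGx⟩ := exists_mem_eq_eval_sub_eval_zero hadd hmul hsmul hwS q
  refine ⟨⟨G, hS𝔅 hGS⟩, hGS, lt_of_le_of_lt (b := ε / 2) ?_ (by linarith)⟩
  rw [Subtype.dist_eq, BoundedContinuousFunction.dist_le (by positivity)]
  intro x
  have hx := hq (w x) (hw x)
  have h0 := hq 0 ⟨neg_nonpos.2 (norm_nonneg w), norm_nonneg w⟩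
  rw [hφ0, sub_zero] at h0
  rw [Real.dist_eq, hFw x, hGx x]
  calc |φ (w x) - (q.eval (w x) - q.eval 0)|
      ≤ |q.eval (w x) - φ (w x)| + |q.eval 0| := by
        rw [← abs_neg (q.eval (w x) - φ (w x))]
        exact (abs_add_le _ _).trans_eq' (by ring_nf)
    _ ≤ ε / 2 := by linarith

end SinglyGenerated

section QuasiLinear
variable {X : Type u} [TopologicalSpace X] {𝔅 : Set (X →ᵇ ℝ)}

theorem QLF.le_of_le_of_mem_sgen (h𝔅 : IsSubalgS 𝔅) (ρ : QLF 𝔅) {h f g : X →ᵇ ℝ}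
    (hh : h ∈ 𝔅) (hf : f ∈ sgen 𝔅 h) (hg : g ∈ sgen 𝔅 h) (hfg : f ≤ g) :
    ρ.toFun f ≤ ρ.toFun g := by
  set d := g + (-1 : ℝ) • f
  have hd : d ∈ sgen 𝔅 h := add_mem_sgen hg (smul_mem_sgen _ hf)
  have hd0 : 0 ≤ ρ.toFun d := by
    refine ρ.pos d (sgen_subset h𝔅 hh hd) fun x => ?_
    simpa [d] using hfg x
  have hfd : f + d = g := by ext x; simp [d]
  have := ρ.add_eq h hh f d hf hd
  rw [hfd] at this
  linarith

/-- `f = (w - 1)⁺` and `h = min w 1` for `w = f + h`, so both lie in `B(w)`. -/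
theorem QLF.le_of_eqOn_one_support (h𝔅 : IsSubalgS 𝔅) (ρ : QLF 𝔅) {f h : X →ᵇ ℝ}
    (hf : f ∈ 𝔅) (hh : h ∈ 𝔅) (hf0 : 0 ≤ f) (hf1 : f ≤ 1) (hh0 : 0 ≤ h) (hh1 : h ≤ 1)
    (hfh : EqOn h 1 (Function.support f)) : ρ.toFun f ≤ ρ.toFun h := by
  replace hf0 : ∀ x, 0 ≤ f x := hf0
  replace hf1 : ∀ x, f x ≤ 1 := hf1
  replace hh0 : ∀ x, 0 ≤ h x := hh0
  replace hh1 : ∀ x, h x ≤ 1 := hh1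
  have hfw : ∀ x, f x = max ((f + h) x - 1) 0 := by
    intro x
    by_cases hx : f x = 0
    · simp only [BoundedContinuousFunction.coe_add, Pi.add_apply, hx, zero_add]
      exact (max_eq_right (by linarith [hh1 x])).symm
    · simp [hfh hx, hf0 x]
  have hhw : ∀ x, h x = min ((f + h) x) 1 := by
    intro x
    by_cases hx : f x = 0
    · simp [hx, hh1 x]
    · simp [hfh hx, hf0 x]
  have hfh_le : f ≤ h := fun x => by
    show f x ≤ h x
    by_cases hx : f x = 0
    · exact hx ▸ hh0 x
    · exact (hfh hx).symm ▸ hf1 x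
  have hw : f + h ∈ 𝔅 := h𝔅.1 f h hf hh
  exact ρ.le_of_le_of_mem_sgen h𝔅 hw
    (mem_sgen_of_eq_comp hf ((continuous_sub_right 1).max continuous_const) (by norm_num) hfw)
    (mem_sgen_of_eq_comp hh (continuous_id.min continuous_const) (by norm_num) hhw) hfh_le

end QuasiLinear

section SetFunction
variable {X : Type u} [TopologicalSpace X] {𝔅 : Set (X →ᵇ ℝ)}

theorem muO_setOf_lt_le (h𝔅 : IsSubalgS 𝔅) (hCc : CcS X ⊆ 𝔅) (ρ : QLF 𝔅) {g : X →ᵇ ℝ}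
    (hg : g ∈ CcS X) (hg0 : 0 ≤ g) {t : ℝ} (ht : 0 < t) :
    muO ρ {x | t < g x} ≤ ENNReal.ofReal (t⁻¹ * ρ.toFun g) := by
  set h := t⁻¹ • g ⊓ 1
  have hh_apply : ∀ x, h x = min (t⁻¹ * g x) 1 := fun _ => rfl
  have hh : h ∈ CcS X :=
    HasCompactSupport.comp_left (g := fun s => min (t⁻¹ * s) 1) hg (by simp)
  have hh_sgen : h ∈ sgen 𝔅 g :=
    mem_sgen_of_eq_comp (φ := fun s => min (t⁻¹ * s) 1) (hCc hh) (by fun_prop) (by simp)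
      hh_apply
  have hρh : ρ.toFun h ≤ t⁻¹ * ρ.toFun g := by
    rw [← ρ.smul_eq _ g (hCc hg)]
    exact ρ.le_of_le_of_mem_sgen h𝔅 (hCc hg) hh_sgen (smul_mem_sgen _ (self_mem_sgen g))
      fun x => min_le_left _ _
  refine iSup₂_le fun f ⟨hf, hf0, hf1, hfU⟩ => ENNReal.ofReal_le_ofReal ?_
  refine le_trans (ρ.le_of_eqOn_one_support h𝔅 (hCc hf) (hCc hh) hf0 hf1
    (fun x => le_min (mul_nonneg (inv_nonneg.2 ht.le) (hg0 x)) zero_le_one)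
    (fun x => min_le_right _ _) fun x hx => ?_) hρh
  have hx : t < g x := hfU (subset_tsupport _ hx)
  rw [hh_apply, Pi.one_apply, min_eq_right ((le_inv_mul_iff₀ ht).2 (by simpa using hx.le))]

theorem muC_le_of_indicator_le (h𝔅 : IsSubalgS 𝔅) (hCc : CcS X ⊆ 𝔅) (ρ : QLF 𝔅)
    {K : Set X} {g : X →ᵇ ℝ} (hg : g ∈ CcS X)
    (hKg : K.indicator (fun _ => (1 : ℝ)) ≤ (g : X → ℝ)) :
    muC ρ K ≤ ENNReal.ofReal (ρ.toFun g) := by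
  have hg0 : 0 ≤ g := fun x => (indicator_nonneg (fun _ _ => zero_le_one) x).trans (hKg x)
  refine ENNReal.le_of_forall_lt_one_mul_le fun a ha => ?_
  rcases eq_or_ne a 0 with rfl | ha0
  · simp
  set t := a.toReal
  have ht : 0 < t := ENNReal.toReal_pos ha0 ha.ne_top
  have hKU : K ⊆ {x | t < g x} := fun x hx => by
    have h1 : (1 : ℝ) ≤ g x := by simpa [hx] using hKg x
    have h2 : t < 1 := by simpa [t] using ENNReal.toReal_strict_mono ENNReal.one_ne_top ha
    exact h2.trans_le h1
  calc a * muC ρ K ≤ ENNReal.ofReal t * ENNReal.ofReal (t⁻¹ * ρ.toFun g) := by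
        rw [ENNReal.ofReal_toReal ha.ne_top]
        gcongr
        exact (iInf₂_le _ ⟨isOpen_lt continuous_const g.continuous, hKU⟩).trans
          (muO_setOf_lt_le h𝔅 hCc ρ hg hg0 ht)
    _ = ENNReal.ofReal (ρ.toFun g) := by
        rw [← ENNReal.ofReal_mul ht.le, mul_inv_cancel_left₀ ht.ne']

theorem exists_mem_CcS_eqOn_one_tsupport_subset [R1Space X] [LocallyCompactSpace X]
    {K U : Set X} (hK : IsCompact K) (hU : IsOpen U) (hKU : K ⊆ U) :
    ∃ f : X →ᵇ ℝ, f ∈ CcS X ∧ 0 ≤ f ∧ f ≤ 1 ∧ (∀ x ∈ K, f x = 1) ∧ tsupport f ⊆ U := by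
  obtain ⟨f, hfK, hfc, hfU, hf01⟩ :=
    exists_continuousMap_one_of_isCompact_subset_isOpen hK hU hKU
  have hf : HasCompactSupport f := hfc
  exact ⟨ofCompactSupport f f.continuous hf, hf, fun x => (hf01 x).1, fun x => (hf01 x).2,
    fun x hx => hfK hx, hfU⟩

theorem biInf_le_muC [R1Space X] [LocallyCompactSpace X] (ρ : QLF 𝔅) {K : Set X}
    (hK : IsCompact K) {s : Set (X →ᵇ ℝ)}
    (hs : ∀ f ∈ CcS X, 0 ≤ f → f ≤ 1 → (∀ x ∈ K, f x = 1) → f ∈ s) :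
    ⨅ g ∈ s, ENNReal.ofReal (ρ.toFun g) ≤ muC ρ K := by
  refine le_iInf₂ fun U ⟨hU, hKU⟩ => ?_
  obtain ⟨f, hf, hf0, hf1, hfK, hfU⟩ := exists_mem_CcS_eqOn_one_tsupport_subset hK hU hKU
  exact (iInf₂_le f (hs f hf hf0 hf1 hfK)).trans
    (le_iSup₂ (f := fun f (_ : f ∈ {f : X →ᵇ ℝ | f ∈ CcS X ∧ 0 ≤ f ∧ f ≤ 1 ∧
      tsupport f ⊆ U}) => ENNReal.ofReal (ρ.toFun f)) f ⟨hf, hf0, hf1, hfU⟩)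

end SetFunction

theorem muRho_compact_eq_inf_general {X : Type u} [TopologicalSpace X]
    [LocallyCompactSpace X] [T2Space X]
    (𝔅 : Set (X →ᵇ ℝ)) (h𝔅 : 𝔅 = C0S X ∨ 𝔅 = CcS X) (ρ : QLF 𝔅)
    (K : Set X) (hK : IsCompact K) :
    (muC ρ K = ⨅ g ∈ {g : X →ᵇ ℝ | g ∈ CcS X ∧
        K.indicator (fun _ => (1 : ℝ)) ≤ (g : X → ℝ)}, ENNReal.ofReal (ρ.toFun g)) ∧
    (muC ρ K = ⨅ g ∈ {g : X →ᵇ ℝ | g ∈ CcS X ∧ 0 ≤ g ∧ g ≤ 1 ∧ ∀ x ∈ K, g x = 1},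
        ENNReal.ofReal (ρ.toFun g)) ∧
    muC ρ K ≠ ∞ := by
  obtain ⟨hsub, hCc⟩ : IsSubalgS 𝔅 ∧ CcS X ⊆ 𝔅 := by
    rcases h𝔅 with rfl | rfl
    exacts [⟨isSubalgS_C0S, CcS_subset_C0S⟩, ⟨isSubalgS_CcS, subset_rfl⟩]
  have hle : ∀ g ∈ CcS X, K.indicator (fun _ => (1 : ℝ)) ≤ ⇑g →
      muC ρ K ≤ ENNReal.ofReal (ρ.toFun g) :=
    fun _ hg => muC_le_of_indicator_le hsub hCc ρ hg
  have hind : ∀ g : X →ᵇ ℝ, 0 ≤ g → (∀ x ∈ K, g x = 1) →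
      K.indicator (fun _ => (1 : ℝ)) ≤ ⇑g :=
    fun g hg0 hgK => indicator_le' (fun x hx => (hgK x hx).ge) fun x _ => hg0 x
  obtain ⟨f, hf, hf0, -, hfK, -⟩ :=
    exists_mem_CcS_eqOn_one_tsupport_subset hK isOpen_univ (subset_univ K)
  refine ⟨le_antisymm ?_ ?_, le_antisymm ?_ ?_,
    ne_top_of_le_ne_top ENNReal.ofReal_ne_top (hle f hf (hind f hf0 hfK))⟩
  · exact le_iInf₂ fun g ⟨hg, hgK⟩ => hle g hg hgK
  · exact biInf_le_muC ρ hK fun g hg hg0 _ hgK => ⟨hg, hind g hg0 hgK⟩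
  · exact le_iInf₂ fun g ⟨hg, hg0, _, hgK⟩ => hle g hg (hind g hg0 hgK)
  · exact biInf_le_muC ρ hK fun g hg hg0 hg1 hgK => ⟨hg, hg0, hg1, hgK⟩

/-- for a quasi-linear functional `ρ` on `C₀(X)` or on `C_c(X)` and compact
`K`, `μ_ρ(K) = inf {ρ(g) : g ∈ C_c(X), g ≥ 1_K} = inf {ρ(g) : g ∈ C_c(X), 0 ≤ g ≤ 1,
g = 1 on K}`; in particular `μ_ρ(K) < ∞`. -/
theorem muRho_compact_eq_inf {X : Type u} [TopologicalSpace X]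
    [LocallyCompactSpace X] [T2Space X] [ConnectedSpace X]
    (𝔅 : Set (X →ᵇ ℝ)) (h𝔅 : 𝔅 = C0S X ∨ 𝔅 = CcS X) (ρ : QLF 𝔅)
    (K : Set X) (hK : IsCompact K) :
    (muC ρ K = ⨅ g ∈ {g : X →ᵇ ℝ | g ∈ CcS X ∧
        K.indicator (fun _ => (1 : ℝ)) ≤ (g : X → ℝ)}, ENNReal.ofReal (ρ.toFun g)) ∧
    (muC ρ K = ⨅ g ∈ {g : X →ᵇ ℝ | g ∈ CcS X ∧ 0 ≤ g ∧ g ≤ 1 ∧ ∀ x ∈ K, g x = 1},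
        ENNReal.ofReal (ρ.toFun g)) ∧
    muC ρ K ≠ ∞ :=
  muRho_compact_eq_inf_general 𝔅 h𝔅 ρ K hK
end

section
/- Let X be a locally compact, Hausdorff, connected space, let ρ be a quasi-linear functional on C₀(X) or on C_c(X), and let μ_ρ be the associated set function. Then: (i) μ_ρ(U) = sup{μ_ρ(K) : K compact, K ⊆ U} for every open U ⊆ X; (ii) μ_ρ(K ⊔ C) = μ_ρ(K) + μ_ρ(C) for all disjoint compact sets K, C ⊆ X; (iii) μ_ρ(U) = μ_ρ(K) + μ_ρ(U \ K) whenever K is compact, U is open, and K ⊆ U. -/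
open Set Filter Topology MeasureTheory
open scoped ENNReal BoundedContinuousFunction

universe u

/-
Quasi-linear functionals are additive only on singly generated subalgebras `B(h)`, and by
Weierstrass approximation `B(h)` contains every `ψ ∘ h` with `ψ` continuous and `ψ 0 = 0`.
Hence `ρ` is additive on nonnegative functions with disjoint supports (the positive and negative
parts of `u - v`), and `ρ v = ρ u + ρ (v - u)` whenever `v = 1` on the support of `u` (both are
functions of `u + v`). Together with Urysohn functions this gives `μ_ρ(V ∪ W) = μ_ρ(V) + μ_ρ(W)`
for disjoint open `V, W` and `μ_ρ(U) ≤ μ_ρ(K) + μ_ρ(U \ K)`: a function admissible for `U` is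
dominated by some `g` equal to `1` near `K`, and `g = φ + (g - φ)` with `φ` a Urysohn function of
`K` inside a given neighbourhood. The reverse inequality adds functions with disjoint supports,
and (ii) follows from (iii) applied to a neighbourhood of `K ∪ C`.
-/

open Polynomial Function

theorem exists_polynomial_coeff_zero_near_of_continuousOn {a b : ℝ} (h0 : (0 : ℝ) ∈ Icc a b)
    {ψ : ℝ → ℝ} (hψ : ContinuousOn ψ (Icc a b)) (hψ0 : ψ 0 = 0) {ε : ℝ} (hε : 0 < ε) :
    ∃ p : ℝ[X], p.coeff 0 = 0 ∧ ∀ t ∈ Icc a b, |p.eval t - ψ t| < ε := by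
  obtain ⟨q, hq⟩ := exists_polynomial_near_of_continuousOn a b ψ hψ (ε / 2) (half_pos hε)
  refine ⟨q - C (q.eval 0), by simp [coeff_zero_eq_eval_zero], fun t ht => ?_⟩
  have hq0 := abs_lt.1 (hq 0 h0)
  have hqt := abs_lt.1 (hq t ht)
  rw [hψ0] at hq0
  rw [eval_sub, eval_C, abs_lt]
  constructor <;> linarith

theorem NonUnitalSubalgebra.aeval_mem_of_coeff_zero {R A : Type*} [CommSemiring R] [Semiring A]
    [Algebra R A] (S : NonUnitalSubalgebra R A) {a : A} (ha : a ∈ S) {p : R[X]}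
    (hp : p.coeff 0 = 0) : aeval a p ∈ S := by
  have hpow : ∀ n : ℕ, a ^ (n + 1) ∈ S := fun n => by
    induction n with
    | zero => simpa using ha
    | succ n ih => rw [pow_succ]; exact mul_mem ih ha
  rw [aeval_eq_sum_range]
  refine sum_mem fun i _ => ?_
  rcases i with _ | n
  · simp [hp]
  · exact S.smul_mem _ (hpow n)

section

variable {X : Type u} [TopologicalSpace X]

theorem BoundedContinuousFunction.aeval_apply {𝕜 : Type*} [NormedField 𝕜] (h : X →ᵇ 𝕜)
    (p : 𝕜[X]) (x : X) : aeval h p x = p.eval (h x) := by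
  induction p using Polynomial.induction_on' <;> simp_all

theorem mem_sgen_of_eq_comp_s12 {𝔅 : Set (X →ᵇ ℝ)} {h w : X →ᵇ ℝ} (hw : w ∈ 𝔅) {ψ : ℝ → ℝ}
    (hψ : Continuous ψ) (hψ0 : ψ 0 = 0) (hwψ : ⇑w = ψ ∘ h) : w ∈ sgen 𝔅 h := by
  refine mem_sInter.2 fun S ⟨hS𝔅, hhS, hadd, hmul, hsmul, hclosed⟩ => ?_
  let T : NonUnitalSubalgebra ℝ (X →ᵇ ℝ) :=
    { carrier := S, add_mem' := hadd _ _, mul_mem' := hmul _ _, smul_mem' := hsmul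
      zero_mem' := by simpa using hsmul 0 h hhS }
  -- `w = ψ ∘ h` is a uniform limit of polynomials in `h` without constant term, which lie in `T`.
  suffices (⟨w, hw⟩ : 𝔅) ∈ closure {x : 𝔅 | (x : X →ᵇ ℝ) ∈ S} from hclosed.closure_subset this
  refine Metric.mem_closure_iff.2 fun ε hε => ?_
  obtain ⟨p, hp0, hp⟩ := exists_polynomial_coeff_zero_near_of_continuousOn
    (a := -‖h‖) (b := ‖h‖) ⟨neg_nonpos.2 (norm_nonneg h), norm_nonneg h⟩ hψ.continuousOn hψ0
    (half_pos hε)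
  have hpS : aeval h p ∈ S := T.aeval_mem_of_coeff_zero hhS hp0
  refine ⟨⟨aeval h p, hS𝔅 hpS⟩, hpS, ?_⟩
  rw [Subtype.dist_eq]
  refine lt_of_le_of_lt ?_ (half_lt_self hε)
  refine (BoundedContinuousFunction.dist_le (half_pos hε).le).2 fun x => ?_
  have hx : h x ∈ Icc (-‖h‖) ‖h‖ := abs_le.1 (h.norm_coe_le_norm x)
  rw [Real.dist_eq, hwψ, comp_apply, h.aeval_apply, abs_sub_comm]
  exact (hp _ hx).le

theorem add_mem_CcS {u v : X →ᵇ ℝ} (hu : u ∈ CcS X) (hv : v ∈ CcS X) : u + v ∈ CcS X :=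
  HasCompactSupport.add hu hv

theorem sub_mem_CcS {u v : X →ᵇ ℝ} (hu : u ∈ CcS X) (hv : v ∈ CcS X) : u - v ∈ CcS X :=
  HasCompactSupport.sub hu hv

namespace SignedQLF

variable {𝔅 : Set (X →ᵇ ℝ)} (ρ : SignedQLF 𝔅)

theorem map_add_of_eq_comp {h u v : X →ᵇ ℝ} (hh : h ∈ 𝔅) (hu : u ∈ 𝔅) (hv : v ∈ 𝔅)
    {ψ φ : ℝ → ℝ} (hψ : Continuous ψ) (hφ : Continuous φ) (hψ0 : ψ 0 = 0) (hφ0 : φ 0 = 0)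
    (huψ : ⇑u = ψ ∘ h) (hvφ : ⇑v = φ ∘ h) : ρ.toFun (u + v) = ρ.toFun u + ρ.toFun v :=
  ρ.add_eq h hh u v (mem_sgen_of_eq_comp_s12 hu hψ hψ0 huψ) (mem_sgen_of_eq_comp_s12 hv hφ hφ0 hvφ)

theorem map_add_of_disjoint_support (hCc : CcS X ⊆ 𝔅) {u v : X →ᵇ ℝ} (hu : u ∈ CcS X)
    (hv : v ∈ CcS X) (hu0 : ∀ x, 0 ≤ u x) (hv0 : ∀ x, 0 ≤ v x)
    (huv : Disjoint (support u) (support v)) : ρ.toFun (u + v) = ρ.toFun u + ρ.toFun v := by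
  -- `u` and `v` are the positive and negative parts of `u - v`.
  have hpos : ⇑u = (fun t => max t 0) ∘ ⇑(u - v) := funext fun x => by
    by_cases hx : u x = 0
    · simp [hx, hv0 x]
    · simp [notMem_support.1 (disjoint_left.1 huv hx), hu0 x]
  have hneg : ⇑v = (fun t => max (-t) 0) ∘ ⇑(u - v) := funext fun x => by
    by_cases hx : u x = 0
    · simp [hx, hv0 x]
    · simp [notMem_support.1 (disjoint_left.1 huv hx), hu0 x]
  exact ρ.map_add_of_eq_comp (hCc (sub_mem_CcS hu hv)) (hCc hu) (hCc hv) (by fun_prop)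
    (by fun_prop) (by simp) (by simp) hpos hneg

theorem map_eq_add_map_sub_of_eq_one (hCc : CcS X ⊆ 𝔅) {u v : X →ᵇ ℝ} (hu : u ∈ CcS X)
    (hv : v ∈ CcS X) (hu0 : ∀ x, 0 ≤ u x) (hv1 : ∀ x, v x ≤ 1) (huv : ∀ x, u x ≠ 0 → v x = 1) :
    ρ.toFun v = ρ.toFun u + ρ.toFun (v - u) := by
  -- With `h = u + v`: `u = (h - 1)⁺` and `v - u = h - 2 (h - 1)⁺`.
  have hu_eq : ⇑u = (fun t => max (t - 1) 0) ∘ ⇑(u + v) := funext fun x => by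
    by_cases hx : u x = 0
    · simp [hx, hv1 x]
    · simp [huv x hx, hu0 x]
  have hvu_eq : ⇑(v - u) = (fun t => t - 2 * max (t - 1) 0) ∘ ⇑(u + v) := funext fun x => by
    have hx := congrFun hu_eq x
    simp only [comp_apply, BoundedContinuousFunction.coe_add, Pi.add_apply] at hx ⊢
    rw [BoundedContinuousFunction.sub_apply, ← hx]
    ring
  have key := ρ.map_add_of_eq_comp (hCc (add_mem_CcS hu hv)) (hCc hu)
    (hCc (sub_mem_CcS hv hu)) (by fun_prop) (by fun_prop) (by norm_num) (by norm_num)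
    hu_eq hvu_eq
  rwa [add_sub_cancel] at key

end SignedQLF

theorem QLF.map_le_map_of_eq_one {𝔅 : Set (X →ᵇ ℝ)} (ρ : QLF 𝔅) (hCc : CcS X ⊆ 𝔅)
    {u v : X →ᵇ ℝ} (hu : u ∈ CcS X) (hv : v ∈ CcS X) (hu0 : ∀ x, 0 ≤ u x) (hu1 : ∀ x, u x ≤ 1)
    (hv0 : ∀ x, 0 ≤ v x) (hv1 : ∀ x, v x ≤ 1) (huv : ∀ x, u x ≠ 0 → v x = 1) :
    ρ.toFun u ≤ ρ.toFun v := by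
  have hvu : 0 ≤ v - u := fun x => by
    by_cases hx : u x = 0
    · simpa [hx] using hv0 x
    · simpa [huv x hx] using hu1 x
  rw [ρ.map_eq_add_map_sub_of_eq_one hCc hu hv hu0 hv1 huv]
  exact le_add_of_nonneg_right (ρ.pos _ (hCc (sub_mem_CcS hv hu)) hvu)

theorem tsupport_subset_sdiff_of_eventuallyEq_zero {M : Type*} [Zero M] {F : X → M} {A K : Set X}
    (hA : IsClosed A) (hFA : support F ⊆ A) (hF : F =ᶠ[𝓝ˢ K] 0) : tsupport F ⊆ A \ K :=
  subset_sdiff.2 ⟨closure_minimal hFA hA, disjoint_left.2 fun _ hx hxK =>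
    notMem_tsupport_iff_eventuallyEq.2 (hF.filter_mono (nhds_le_nhdsSet hxK)) hx⟩

def admissible (U : Set X) : Set (X →ᵇ ℝ) :=
  {f | f ∈ CcS X ∧ 0 ≤ f ∧ f ≤ 1 ∧ tsupport f ⊆ U}

section admissible

variable {U V W K : Set X} {f g φ : X →ᵇ ℝ}

theorem zero_mem_admissible (U : Set X) : 0 ∈ admissible U :=
  ⟨HasCompactSupport.zero, le_rfl, fun _ => zero_le_one, by simp⟩

theorem mem_admissible_of_tsupport_subset (hf : f ∈ admissible U) (hfV : tsupport f ⊆ V) :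
    f ∈ admissible V :=
  ⟨hf.1, hf.2.1, hf.2.2.1, hfV⟩

theorem admissible_mono (hUV : U ⊆ V) : admissible U ⊆ admissible V :=
  fun _ hf => mem_admissible_of_tsupport_subset hf (hf.2.2.2.trans hUV)

theorem disjoint_support_of_mem_admissible (hf : f ∈ admissible V) (hg : g ∈ admissible W)
    (hVW : Disjoint V W) : Disjoint (support f) (support g) :=
  hVW.mono ((subset_tsupport f).trans hf.2.2.2) ((subset_tsupport g).trans hg.2.2.2)

theorem add_mem_admissible_union (hf : f ∈ admissible V) (hg : g ∈ admissible W)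
    (hVW : Disjoint V W) : f + g ∈ admissible (V ∪ W) := by
  have hfg := disjoint_support_of_mem_admissible hf hg hVW
  refine ⟨add_mem_CcS hf.1 hg.1, fun x => add_nonneg (hf.2.1 x) (hg.2.1 x), fun x => ?_, ?_⟩
  · by_cases hx : f x = 0
    · simpa [hx] using hg.2.2.1 x
    · simpa [notMem_support.1 (disjoint_left.1 hfg hx)] using hf.2.2.1 x
  · exact (tsupport_add f g).trans (union_subset_union hf.2.2.2 hg.2.2.2)

theorem mul_mem_admissible (hf0 : 0 ≤ f) (hf1 : f ≤ 1) (hφ : φ ∈ admissible V) :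
    f * φ ∈ admissible V :=
  ⟨HasCompactSupport.mul_left hφ.1, fun x => mul_nonneg (hf0 x) (hφ.2.1 x),
    fun x => mul_le_one₀ (hf1 x) (hφ.2.1 x) (hφ.2.2.1 x), tsupport_mul_subset_right.trans hφ.2.2.2⟩

theorem sub_mem_admissible_tsupport_sdiff (hg : g ∈ admissible U) (hφ0 : 0 ≤ φ) (hφg : φ ≤ g)
    (hφK : ⇑φ =ᶠ[𝓝ˢ K] g) : g - φ ∈ admissible (tsupport g \ K) := by
  have hsupp : support (g - φ) ⊆ tsupport g := fun x hx => subset_tsupport g fun hgx => by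
    have hφx : φ x = 0 := le_antisymm (hgx ▸ hφg x) (hφ0 x)
    exact hx (by simp [hgx, hφx])
  have hK : ⇑(g - φ) =ᶠ[𝓝ˢ K] 0 := by
    filter_upwards [hφK] with x hx
    simp [hx]
  refine ⟨HasCompactSupport.mono' hg.1 hsupp, fun x => sub_nonneg.2 (hφg x),
    fun x => (sub_le_self _ (hφ0 x)).trans (hg.2.2.1 x), ?_⟩
  exact tsupport_subset_sdiff_of_eventuallyEq_zero (isClosed_tsupport g) hsupp hK

theorem exists_mem_admissible_eventuallyEq_one [R1Space X] [LocallyCompactSpace X]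
    (hK : IsCompact K) (hU : IsOpen U) (hKU : K ⊆ U) :
    ∃ φ ∈ admissible U, ⇑φ =ᶠ[𝓝ˢ K] 1 := by
  obtain ⟨L, hL, hKL, hLU⟩ := exists_compact_between hK hU hKU
  obtain ⟨φ, hφL, hφc, hφU, hφ01⟩ := exists_continuousMap_one_of_isCompact_subset_isOpen hL hU hLU
  refine ⟨ofCompactSupport φ φ.continuous hφc, ⟨hφc, fun x => (hφ01 x).1, fun x => (hφ01 x).2, hφU⟩,
    ?_⟩
  exact mem_of_superset (subset_interior_iff_mem_nhdsSet.1 hKL) hφL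

end admissible

section muRho

variable {𝔅 : Set (X →ᵇ ℝ)} (ρ : QLF 𝔅) {U V W K C : Set X} {f g : X →ᵇ ℝ}

theorem QLF.ofReal_map_add_of_mem_admissible (hCc : CcS X ⊆ 𝔅) (hf : f ∈ admissible V)
    (hg : g ∈ admissible W) (hVW : Disjoint V W) :
    ENNReal.ofReal (ρ.toFun (f + g)) =
      ENNReal.ofReal (ρ.toFun f) + ENNReal.ofReal (ρ.toFun g) := by
  rw [ρ.map_add_of_disjoint_support hCc hf.1 hg.1 hf.2.1 hg.2.1
    (disjoint_support_of_mem_admissible hf hg hVW),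
    ENNReal.ofReal_add (ρ.pos f (hCc hf.1) hf.2.1) (ρ.pos g (hCc hg.1) hg.2.1)]

theorem muO_eq_iSup_admissible (U : Set X) :
    muO ρ U = ⨆ f ∈ admissible U, ENNReal.ofReal (ρ.toFun f) :=
  rfl

theorem ofReal_le_muO (hf : f ∈ admissible U) : ENNReal.ofReal (ρ.toFun f) ≤ muO ρ U :=
  le_iSup₂ (f := fun g (_ : g ∈ admissible U) => ENNReal.ofReal (ρ.toFun g)) f hf

theorem muO_mono (hUV : U ⊆ V) : muO ρ U ≤ muO ρ V :=
  iSup₂_le fun _ hf => ofReal_le_muO ρ (admissible_mono hUV hf)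

theorem muC_le_muO (hU : IsOpen U) (hKU : K ⊆ U) : muC ρ K ≤ muO ρ U :=
  biInf_le _ ⟨hU, hKU⟩

theorem le_muC_add {a b : ℝ≥0∞} (h : ∀ V, IsOpen V → K ⊆ V → a ≤ muO ρ V + b) :
    a ≤ muC ρ K + b := by
  simp_rw [muC, ENNReal.iInf_add]
  exact le_iInf₂ fun V hV => h V hV.1 hV.2

theorem ofReal_le_muC_tsupport (hf : f ∈ admissible U) :
    ENNReal.ofReal (ρ.toFun f) ≤ muC ρ (tsupport f) :=
  le_iInf₂ fun _ hV => ofReal_le_muO ρ (mem_admissible_of_tsupport_subset hf hV.2)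

theorem muO_eq_iSup_muC (hU : IsOpen U) :
    muO ρ U = ⨆ K ∈ {K : Set X | IsCompact K ∧ K ⊆ U}, muC ρ K := by
  refine le_antisymm (iSup₂_le fun f hf => ?_) (iSup₂_le fun K hK => muC_le_muO ρ hU hK.2)
  exact (ofReal_le_muC_tsupport ρ hf).trans
    (le_iSup₂ (f := fun K (_ : K ∈ {K : Set X | IsCompact K ∧ K ⊆ U}) => muC ρ K) _
      ⟨hf.1, hf.2.2.2⟩)

theorem add_muO_le_muO_union (hCc : CcS X ⊆ 𝔅) (hVW : Disjoint V W) :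
    muO ρ V + muO ρ W ≤ muO ρ (V ∪ W) :=
  ENNReal.biSup_add_biSup_le' ⟨0, zero_mem_admissible V⟩ ⟨0, zero_mem_admissible W⟩
    fun _ hf _ hg => (ρ.ofReal_map_add_of_mem_admissible hCc hf hg hVW).symm.le.trans
      (ofReal_le_muO ρ (add_mem_admissible_union hf hg hVW))

theorem muO_union_le [R1Space X] [LocallyCompactSpace X] (hCc : CcS X ⊆ 𝔅) (hV : IsOpen V)
    (hW : IsOpen W) (hVW : Disjoint V W) : muO ρ (V ∪ W) ≤ muO ρ V + muO ρ W := by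
  refine iSup₂_le fun f hf => ?_
  obtain ⟨φ, hφ, hφ1⟩ := exists_mem_admissible_eventuallyEq_one (hf.1.diff hW) hV
    fun x hx => (hf.2.2.2 hx.1).resolve_right hx.2
  have h₁ : f * φ ∈ admissible V := mul_mem_admissible hf.2.1 hf.2.2.1 hφ
  have h₂ : f - f * φ ∈ admissible W := by
    have hfφ : ⇑(f * φ) =ᶠ[𝓝ˢ (tsupport f \ W)] f := by
      filter_upwards [hφ1] with x hx
      simp [hx]
    refine admissible_mono ?_ (sub_mem_admissible_tsupport_sdiff hf h₁.2.1
      (fun x => mul_le_of_le_one_right (hf.2.1 x) (hφ.2.2.1 x)) hfφ)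
    rw [sdiff_sdiff_right_self]
    exact inter_subset_right
  calc ENNReal.ofReal (ρ.toFun f) = ENNReal.ofReal (ρ.toFun (f * φ + (f - f * φ))) := by
        rw [add_sub_cancel]
    _ = ENNReal.ofReal (ρ.toFun (f * φ)) + ENNReal.ofReal (ρ.toFun (f - f * φ)) :=
        ρ.ofReal_map_add_of_mem_admissible hCc h₁ h₂ hVW
    _ ≤ muO ρ V + muO ρ W := add_le_add (ofReal_le_muO ρ h₁) (ofReal_le_muO ρ h₂)

theorem muO_le_muC_add_muO_sdiff [R1Space X] [LocallyCompactSpace X] (hCc : CcS X ⊆ 𝔅)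
    (hK : IsCompact K) (hU : IsOpen U) (hKU : K ⊆ U) : muO ρ U ≤ muC ρ K + muO ρ (U \ K) := by
  refine iSup₂_le fun f hf => le_muC_add ρ fun V hV hKV => ?_
  obtain ⟨φ, hφ, hφ1⟩ := exists_mem_admissible_eventuallyEq_one hK (hV.inter hU)
    (subset_inter hKV hKU)
  obtain ⟨g, hg, hg1⟩ := exists_mem_admissible_eventuallyEq_one (hf.1.union hφ.1) hU
    (union_subset hf.2.2.2 (hφ.2.2.2.trans inter_subset_right))
  have hg_one : ∀ x ∈ tsupport f ∪ tsupport φ, g x = 1 := fun _ hx => hg1.self_of_nhdsSet hx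
  have hφg : ⇑φ =ᶠ[𝓝ˢ K] g := by
    filter_upwards [hφ1] with x hx
    rw [hx, Pi.one_apply, hg_one x (Or.inr (subset_tsupport φ (by simp [hx])))]
  have hgφ : g - φ ∈ admissible (U \ K) := by
    refine admissible_mono (sdiff_subset_sdiff_left hg.2.2.2)
      (sub_mem_admissible_tsupport_sdiff hg hφ.2.1 (fun x => ?_) hφg)
    by_cases hx : φ x = 0
    · simpa [hx] using hg.2.1 x
    · simpa [hg_one x (Or.inr (subset_tsupport φ hx))] using hφ.2.2.1 x
  have hφV : φ ∈ admissible V :=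
    mem_admissible_of_tsupport_subset hφ (hφ.2.2.2.trans inter_subset_left)
  calc ENNReal.ofReal (ρ.toFun f) ≤ ENNReal.ofReal (ρ.toFun g) :=
        ENNReal.ofReal_le_ofReal (ρ.map_le_map_of_eq_one hCc hf.1 hg.1 hf.2.1 hf.2.2.1 hg.2.1
          hg.2.2.1 fun x hx => hg_one x (Or.inl (subset_tsupport f hx)))
    _ = ENNReal.ofReal (ρ.toFun φ) + ENNReal.ofReal (ρ.toFun (g - φ)) := by
        rw [ρ.map_eq_add_map_sub_of_eq_one hCc hφ.1 hg.1 hφ.2.1 hg.2.2.1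
          fun x hx => hg_one x (Or.inr (subset_tsupport φ hx)),
          ENNReal.ofReal_add (ρ.pos φ (hCc hφ.1) hφ.2.1) (ρ.pos _ (hCc hgφ.1) hgφ.2.1)]
    _ ≤ muO ρ V + muO ρ (U \ K) := add_le_add (ofReal_le_muO ρ hφV) (ofReal_le_muO ρ hgφ)

theorem muC_add_muO_sdiff_le (hCc : CcS X ⊆ 𝔅) (hU : IsOpen U) (hKU : K ⊆ U) :
    muC ρ K + muO ρ (U \ K) ≤ muO ρ U := by
  rw [muO_eq_iSup_admissible ρ (U \ K), ENNReal.add_biSup ⟨0, zero_mem_admissible _⟩]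
  refine iSup₂_le fun g hg => ?_
  calc muC ρ K + ENNReal.ofReal (ρ.toFun g) ≤ muO ρ (U \ tsupport g) + muO ρ (tsupport g) :=
        add_le_add (muC_le_muO ρ (hU.sdiff (isClosed_tsupport g))
            (subset_sdiff.2 ⟨hKU, (subset_sdiff.1 hg.2.2.2).2.symm⟩))
          (ofReal_le_muO ρ (mem_admissible_of_tsupport_subset hg subset_rfl))
    _ ≤ muO ρ ((U \ tsupport g) ∪ tsupport g) := add_muO_le_muO_union ρ hCc disjoint_sdiff_left
    _ ≤ muO ρ U := muO_mono ρ (union_subset sdiff_subset (hg.2.2.2.trans sdiff_subset))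

theorem muO_eq_muC_add_muO_sdiff [R1Space X] [LocallyCompactSpace X] (hCc : CcS X ⊆ 𝔅)
    (hK : IsCompact K) (hU : IsOpen U) (hKU : K ⊆ U) : muO ρ U = muC ρ K + muO ρ (U \ K) :=
  le_antisymm (muO_le_muC_add_muO_sdiff ρ hCc hK hU hKU) (muC_add_muO_sdiff_le ρ hCc hU hKU)

theorem muC_union [T2Space X] [LocallyCompactSpace X] (hCc : CcS X ⊆ 𝔅) (hK : IsCompact K)
    (hC : IsCompact C) (hKC : Disjoint K C) : muC ρ (K ∪ C) = muC ρ K + muC ρ C := by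
  refine le_antisymm ?_ (le_iInf₂ fun U ⟨hU, hKCU⟩ => ?_)
  · obtain ⟨A, B, hA, hB, hKA, hCB, hAB⟩ := SeparatedNhds.of_isCompact_isCompact hK hC hKC
    refine le_muC_add ρ fun V hV hKV => ?_
    rw [add_comm]
    refine le_muC_add ρ fun W hW hCW => ?_
    calc muC ρ (K ∪ C) ≤ muO ρ (V ∩ A ∪ W ∩ B) :=
          muC_le_muO ρ ((hV.inter hA).union (hW.inter hB))
            (union_subset_union (subset_inter hKV hKA) (subset_inter hCW hCB))
      _ ≤ muO ρ (V ∩ A) + muO ρ (W ∩ B) := muO_union_le ρ hCc (hV.inter hA) (hW.inter hB)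
          (hAB.mono inter_subset_right inter_subset_right)
      _ ≤ muO ρ W + muO ρ V := by
          rw [add_comm]
          exact add_le_add (muO_mono ρ inter_subset_left) (muO_mono ρ inter_subset_left)
  · calc muC ρ K + muC ρ C ≤ muC ρ K + muO ρ (U \ K) :=
          add_le_add le_rfl (muC_le_muO ρ (hU.sdiff hK.isClosed)
            (subset_sdiff.2 ⟨subset_union_right.trans hKCU, hKC.symm⟩))
      _ = muO ρ U := (muO_eq_muC_add_muO_sdiff ρ hCc hK hU (subset_union_left.trans hKCU)).symm

end muRho

end

theorem muRho_regular_additive_general {X : Type u} [TopologicalSpace X]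
    [LocallyCompactSpace X] [T2Space X]
    (𝔅 : Set (X →ᵇ ℝ)) (h𝔅 : 𝔅 = C0S X ∨ 𝔅 = CcS X) (ρ : QLF 𝔅) :
    (∀ U : Set X, IsOpen U →
      muO ρ U = ⨆ K ∈ {K : Set X | IsCompact K ∧ K ⊆ U}, muC ρ K) ∧
    (∀ K C : Set X, IsCompact K → IsCompact C → Disjoint K C →
      muC ρ (K ∪ C) = muC ρ K + muC ρ C) ∧
    (∀ (K U : Set X), IsCompact K → IsOpen U → K ⊆ U →
      muO ρ U = muC ρ K + muO ρ (U \ K)) := by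
  have hCc : CcS X ⊆ 𝔅 := by
    rcases h𝔅 with rfl | rfl
    · exact fun f hf => HasCompactSupport.is_zero_at_infty hf
    · exact subset_rfl
  exact ⟨fun U hU => muO_eq_iSup_muC ρ hU, fun K C hK hC hKC => muC_union ρ hCc hK hC hKC,
    fun K U hK hU hKU => muO_eq_muC_add_muO_sdiff ρ hCc hK hU hKU⟩

/-- for a quasi-linear functional `ρ` on `C₀(X)` or on `C_c(X)`:
(i) `μ_ρ(U) = sup {μ_ρ(K) : K compact, K ⊆ U}` for open `U`;
(ii) `μ_ρ(K ⊔ C) = μ_ρ(K) + μ_ρ(C)` for disjoint compact `K, C`;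
(iii) `μ_ρ(U) = μ_ρ(K) + μ_ρ(U \ K)` for compact `K ⊆ U` open. -/
theorem muRho_regular_additive {X : Type u} [TopologicalSpace X]
    [LocallyCompactSpace X] [T2Space X] [ConnectedSpace X]
    (𝔅 : Set (X →ᵇ ℝ)) (h𝔅 : 𝔅 = C0S X ∨ 𝔅 = CcS X) (ρ : QLF 𝔅) :
    (∀ U : Set X, IsOpen U →
      muO ρ U = ⨆ K ∈ {K : Set X | IsCompact K ∧ K ⊆ U}, muC ρ K) ∧
    (∀ K C : Set X, IsCompact K → IsCompact C → Disjoint K C →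
      muC ρ (K ∪ C) = muC ρ K + muC ρ C) ∧
    (∀ (K U : Set X), IsCompact K → IsOpen U → K ⊆ U →
      muO ρ U = muC ρ K + muO ρ (U \ K)) :=
  muRho_regular_additive_general 𝔅 h𝔅 ρ
end
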